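/- (Hybrid Zador–Pierce rate for greedy quantization.) For every d ≥ 1, r ∈ (0,∞), M ∈ (0,1], C₀ ∈ [1,∞) and p₀ > 0 there exists a constant κ ∈ (0,+∞) such that the following holds. Let P = h·λ_d be a Borel probability measure on ℝ^d with h ∈ L^{d/(d+r)}(λ_d) and ∫ ‖x‖^r dP(x) < +∞, let (a_n)_{n≥1} be an L^r-optimal greedy quantization sequence for P, and let A ⊆ ℝ^d be a Borel set containing supp(P) and a₁, star-shaped with respect to a₁, such that: (i) the peakless constant p(A) := inf{ λ_d(B(x,t)∩A)/λ_d(B(x,t)) : x ∈ A, 0 < t ≤ ‖x−a₁‖ } satisfies p(A) ≥ p₀; (ii) there is a norm ‖·‖₀ on ℝ^d with C₀^{−1}‖x‖₀ ≤ ‖x‖ ≤ C₀‖x‖₀ for all x, and h(y) ≥ M·h(x) for all x,y ∈ A∖{a₁} with ‖y−a₁‖₀ ≤ ‖x−a₁‖₀ (h is almost radial non-increasing on A w.r.t. a₁). Then for every n ≥ 2, e_r(a^{(n)},P) ≤ κ · ‖h‖_{L^{d/(d+r)}(λ_d)}^{1/r} · (n−1)^{−1/d}. -/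

import Mathlib

open MeasureTheory Metric
open scoped ENNReal NNReal

/-- The `L^r`-quantization error of a grid `Γ` with respect to the measure `P`:
`e_r(Γ,P) = (∫ d(x,Γ)^r dP(x))^(1/r)`. -/
noncomputable def qerr {E : Type*} [NormedAddCommGroup E] [MeasurableSpace E]
    (r : ℝ) (P : Measure E) (Γ : Set E) : ℝ :=
  (∫ x, infDist x Γ ^ r ∂P) ^ (1 / r)

/-- The first `n` points `a^{(n)} = {a 1, …, a n}` of a sequence `a`. -/
def aSet {E : Type*} (a : ℕ → E) (n : ℕ) : Set E := a '' Set.Icc 1 n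

/-- `(a_n)_{n ≥ 1}` is an `L^r`-optimal greedy quantization sequence for `P`. -/
def IsGreedy {E : Type*} [NormedAddCommGroup E] [MeasurableSpace E]
    (r : ℝ) (P : Measure E) (a : ℕ → E) : Prop :=
  ∀ (n : ℕ) (ξ : E), qerr r P (aSet a (n + 1)) ≤ qerr r P (insert ξ (aSet a n))

/-- The (topological) support of a measure. -/
def msupport {E : Type*} [TopologicalSpace E] [MeasurableSpace E]
    (P : MeasureTheory.Measure E) : Set E :=
  {x | ∀ U ∈ nhds x, 0 < P U}

/-!
Let `D_k = ∫ d(x, a^{(k)})^r dP`. For `x ∈ A` at distance `δ > 0` from `a^{(k)}`, star-shapedness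
provides a point `ξ` on `[a₁, x]` at distance `δ / 4` from `x`. Inserting `ξ` lowers
`d(·, a^{(k)})^r` by a multiple of `δ^r` on `B(ξ, δ / (8 C₀²)) ∩ A`, and this set has `P`-mass
`≳ h(x) δ^d`: the peakless condition bounds its Lebesgue measure and, since the ball is radially
closer to `a₁` than `x`, almost radial monotonicity bounds `h` on it by `M h(x)`. Greedy optimality
then gives the micro–macro inequality `c h(x) d(x, a^{(k)})^{d+r} ≤ D_k - D_{k+1}` on `A ⊇ supp P`.
Hölder's inequality with exponents `d/(d+r)` and `r/(d+r)` turns it into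
`β D_k^{1+d/r} ≤ D_k - D_{k+1}`, so `D_k^{-d/r}` grows by at least `β d / r` at each step, which
gives `D_n ≲ (n-1)^{-r/d}`.
-/
lemma one_add_mul_le_one_sub_rpow_neg {γ x : ℝ} (hγ : 0 ≤ γ) (hx : x < 1) :
    1 + γ * x ≤ (1 - x) ^ (-γ) := by
  have h1x : 0 < 1 - x := by linarith
  have hlog : γ * x ≤ Real.log (1 - x) * -γ := by
    nlinarith [Real.log_le_sub_one_of_pos h1x]
  rw [Real.rpow_def_of_pos h1x]
  linarith [Real.add_one_le_exp (Real.log (1 - x) * -γ)]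

lemma rpow_neg_add_le_of_le_sub_mul_rpow {γ β u v : ℝ} (hγ : 0 ≤ γ) (hu : 0 < u) (hv : 0 < v)
    (h : v ≤ u - β * u ^ (1 + γ)) : u ^ (-γ) + β * γ ≤ v ^ (-γ) := by
  set x := β * u ^ γ
  have hvx : v ≤ u * (1 - x) := by
    rw [Real.rpow_add hu, Real.rpow_one] at h; linarith
  have hx : x < 1 := by nlinarith
  have hxu : u ^ (-γ) * x = β := by
    rw [mul_left_comm, ← Real.rpow_add hu, neg_add_cancel, Real.rpow_zero, mul_one]
  calc u ^ (-γ) + β * γ = u ^ (-γ) * (1 + γ * x) := by rw [← hxu]; ring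
    _ ≤ u ^ (-γ) * (1 - x) ^ (-γ) := by
      gcongr; exact one_add_mul_le_one_sub_rpow_neg hγ hx
    _ = (u * (1 - x)) ^ (-γ) := (Real.mul_rpow hu.le (by linarith)).symm
    _ ≤ v ^ (-γ) := Real.rpow_le_rpow_of_nonpos hv hvx (by linarith)

section Decay

variable {γ β : ℝ} {u : ℕ → ℝ}

lemma mul_natCast_sub_one_le_rpow_neg_of_decay (hγ : 0 ≤ γ) (hβ : 0 ≤ β)
    (hu : ∀ k, 0 ≤ u k) (hstep : ∀ k, 1 ≤ k → β * u k ^ (1 + γ) ≤ u k - u (k + 1))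
    {n : ℕ} (hn : 1 ≤ n) (hun : 0 < u n) : β * γ * ((n : ℝ) - 1) ≤ u n ^ (-γ) := by
  induction n, hn using Nat.le_induction with
  | base => simpa using (Real.rpow_pos_of_pos hun _).le
  | succ k hk ih =>
    have hdecr : u (k + 1) ≤ u k := by
      linarith [hstep k hk, mul_nonneg hβ (Real.rpow_nonneg (hu k) (1 + γ))]
    have := rpow_neg_add_le_of_le_sub_mul_rpow (β := β) hγ (hun.trans_le hdecr) hun
      (by linarith [hstep k hk])
    push_cast
    linarith [ih (hun.trans_le hdecr)]

lemma le_rpow_neg_of_decay (hγ : 0 < γ) (hβ : 0 < β)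
    (hu : ∀ k, 0 ≤ u k) (hstep : ∀ k, 1 ≤ k → β * u k ^ (1 + γ) ≤ u k - u (k + 1))
    {n : ℕ} (hn : 2 ≤ n) : u n ≤ (β * γ * ((n : ℝ) - 1)) ^ (-(1 / γ)) := by
  have hn1 : (1 : ℝ) ≤ (n : ℝ) - 1 := by
    have : (2 : ℝ) ≤ n := by exact_mod_cast hn
    linarith
  rcases (hu n).eq_or_lt with h0 | hpos
  · rw [← h0]; positivity
  calc u n = (u n ^ (-γ)) ^ (-(1 / γ)) := by
        rw [← Real.rpow_mul hpos.le, neg_mul_neg, mul_one_div_cancel hγ.ne', Real.rpow_one]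
    _ ≤ (β * γ * ((n : ℝ) - 1)) ^ (-(1 / γ)) :=
      Real.rpow_le_rpow_of_nonpos (by positivity)
        (mul_natCast_sub_one_le_rpow_neg_of_decay hγ.le hβ.le hu hstep (by omega) hpos)
        (by simp only [Left.neg_nonpos_iff]; positivity)

end Decay

lemma mul_rpow_le_of_mul_rpow_add_le {d r b t T : ℝ} (hr : 0 ≤ r) (hdr : 0 < d + r)
    (hb : 0 ≤ b) (ht : 0 ≤ t) (hT : b * t ^ (d + r) ≤ T) :
    b * t ^ r ≤ T ^ (r / (d + r)) * b ^ (d / (d + r)) := by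
  rcases hb.eq_or_lt with rfl | hb
  · rw [zero_mul]
    exact mul_nonneg (Real.rpow_nonneg (by simpa using hT) _) (Real.rpow_nonneg le_rfl _)
  calc b * t ^ r = (b * t ^ (d + r)) ^ (r / (d + r)) * b ^ (d / (d + r)) := by
        rw [Real.mul_rpow hb.le (Real.rpow_nonneg ht _), ← Real.rpow_mul ht,
          mul_div_cancel₀ _ hdr.ne', mul_right_comm, ← Real.rpow_add hb, ← add_div,
          add_comm r, div_self hdr.ne', Real.rpow_one]
    _ ≤ T ^ (r / (d + r)) * b ^ (d / (d + r)) := by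
      gcongr

lemma integral_mul_rpow_le_of_ae_mul_rpow_add_le {α : Type*} [MeasurableSpace α] {μ : Measure α}
    {h t : α → ℝ} {d r T : ℝ} (hr : 0 ≤ r) (hdr : 0 < d + r) (h0 : ∀ x, 0 ≤ h x)
    (ht : ∀ x, 0 ≤ t x) (hmeas : AEStronglyMeasurable (fun x => h x * t x ^ r) μ)
    (hint : Integrable (fun x => h x ^ (d / (d + r))) μ)
    (hT : ∀ᵐ x ∂μ, h x * t x ^ (d + r) ≤ T) :
    ∫ x, h x * t x ^ r ∂μ ≤ T ^ (r / (d + r)) * ∫ x, h x ^ (d / (d + r)) ∂μ := by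
  have hle : ∀ᵐ x ∂μ, h x * t x ^ r ≤ T ^ (r / (d + r)) * h x ^ (d / (d + r)) := by
    filter_upwards [hT] with x hx
    exact mul_rpow_le_of_mul_rpow_add_le hr hdr (h0 x) (ht x) hx
  have hint' := hint.const_mul (T ^ (r / (d + r)))
  rw [← integral_const_mul]
  refine integral_mono_ae (hint'.mono' hmeas ?_) hint' hle
  filter_upwards [hle] with x hx
  rwa [Real.norm_of_nonneg (mul_nonneg (h0 x) (Real.rpow_nonneg (ht x) r))]

lemma mul_rpow_neg_mul_rpow_le_of_le_rpow_inv_mul {c D I T q : ℝ} (hc : 0 < c) (hD : 0 ≤ D)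
    (hI : 0 < I) (hT : 0 ≤ T) (hq : 0 < q) (h : D ≤ (T / c) ^ q⁻¹ * I) :
    c * I ^ (-q) * D ^ q ≤ T := by
  have hDI : (D / I) ^ q ≤ T / c := by
    calc (D / I) ^ q ≤ ((T / c) ^ q⁻¹) ^ q := by
          gcongr; rwa [div_le_iff₀ hI]
      _ = T / c := by
          rw [← Real.rpow_mul (by positivity), inv_mul_cancel₀ hq.ne', Real.rpow_one]
  rw [Real.div_rpow hD hI.le, le_div_iff₀ hc] at hDI
  calc c * I ^ (-q) * D ^ q = D ^ q / I ^ q * c := by rw [Real.rpow_neg hI.le]; ring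
    _ ≤ T := hDI

lemma rpow_rate_eq {c I d r m : ℝ} (hc : 0 ≤ c) (hI : 0 < I) (hd : 0 < d) (hr : 0 < r)
    (hm : 0 ≤ m) :
    ((c * I ^ (-(1 + d / r)) * (d / r) * m) ^ (-(1 / (d / r)))) ^ (1 / r) =
      (c * (d / r)) ^ (-(1 / d)) * (I ^ ((d + r) / d)) ^ (1 / r) * m ^ (-(1 / d)) := by
  have hIq : 0 ≤ I ^ (-(1 + d / r)) := by positivity
  rw [← Real.rpow_mul (by positivity), show -(1 / (d / r)) * (1 / r) = -(1 / d) by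
      field_simp, mul_right_comm c, Real.mul_rpow (by positivity) hm,
    Real.mul_rpow (by positivity) hIq, ← Real.rpow_mul hI.le, ← Real.rpow_mul hI.le]
  congr 3
  field_simp
  ring

lemma mem_aSet_one {E : Type*} (a : ℕ → E) {k : ℕ} (hk : 1 ≤ k) : a 1 ∈ aSet a k :=
  ⟨1, ⟨le_rfl, hk⟩, rfl⟩

section Distortion

variable {E : Type*} [NormedAddCommGroup E] [MeasurableSpace E] {r : ℝ} {P : Measure E}

noncomputable def distortion (r : ℝ) (P : Measure E) (Γ : Set E) : ℝ :=
  ∫ x, infDist x Γ ^ r ∂P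

lemma distortion_nonneg (Γ : Set E) : 0 ≤ distortion r P Γ :=
  integral_nonneg fun _ => Real.rpow_nonneg infDist_nonneg r

lemma qerr_eq_distortion_rpow (Γ : Set E) : qerr r P Γ = distortion r P Γ ^ (1 / r) := rfl

lemma IsGreedy.distortion_le_insert {a : ℕ → E} (ha : IsGreedy r P a) (hr : 0 < r) (n : ℕ)
    (ξ : E) : distortion r P (aSet a (n + 1)) ≤ distortion r P (insert ξ (aSet a n)) :=
  (Real.rpow_le_rpow_iff (distortion_nonneg _) (distortion_nonneg _) (by positivity)).1 (ha n ξ)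

lemma IsGreedy.distortion_succ_le {a : ℕ → E} (ha : IsGreedy r P a) (hr : 0 < r) {k : ℕ}
    (hk : 1 ≤ k) : distortion r P (aSet a (k + 1)) ≤ distortion r P (aSet a k) := by
  simpa [Set.insert_eq_of_mem (mem_aSet_one a hk)] using ha.distortion_le_insert hr k (a 1)

variable [OpensMeasurableSpace E] [SecondCountableTopology E] [IsFiniteMeasure P]

lemma integrable_infDist_rpow (hr : 0 < r) (hmom : ∫⁻ x, (‖x‖₊ : ℝ≥0∞) ^ r ∂P < ⊤)
    {Γ : Set E} {w : E} (hw : w ∈ Γ) : Integrable (fun x => infDist x Γ ^ r) P := by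
  have hid : MemLp id (ENNReal.ofReal r) P := by
    refine ⟨aestronglyMeasurable_id, ?_⟩
    rw [eLpNorm_lt_top_iff_lintegral_rpow_enorm_lt_top (by simpa using hr) ENNReal.ofReal_ne_top,
      ENNReal.toReal_ofReal hr.le]
    simpa [enorm_eq_nnnorm] using hmom
  have hdist := (hid.sub (memLp_const w)).integrable_norm_rpow'
  rw [ENNReal.toReal_ofReal hr.le] at hdist
  refine hdist.mono'
    ((continuous_infDist_pt Γ).rpow_const fun _ => Or.inr hr.le).aestronglyMeasurable
    (ae_of_all _ fun x => ?_)
  rw [Real.norm_of_nonneg (Real.rpow_nonneg infDist_nonneg r)]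
  exact Real.rpow_le_rpow infDist_nonneg
    ((infDist_le_dist_of_mem hw).trans_eq (dist_eq_norm x w)) hr.le

/-- Adding a point `ξ` at distance `δ/4` from `x`, where `δ = d(x, Γ)`, brings every point of
`B(ξ, δ/8)` within `δ/8` of the grid, whereas it was at least `5δ/8` away from `Γ`. -/
lemma mul_measure_le_distortion_sub_insert (hr : 0 < r)
    (hmom : ∫⁻ x, (‖x‖₊ : ℝ≥0∞) ^ r ∂P < ⊤) {Γ : Set E} (hΓ : Γ.Nonempty) {x ξ : E}
    (hxξ : dist x ξ ≤ infDist x Γ / 4) {B : Set E} (hB : MeasurableSet B)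
    (hBξ : B ⊆ closedBall ξ (infDist x Γ / 8)) :
    ((5 / 8) ^ r - (1 / 8) ^ r) * infDist x Γ ^ r * P.real B ≤
      distortion r P Γ - distortion r P (insert ξ Γ) := by
  set δ := infDist x Γ
  obtain ⟨w, hw⟩ := hΓ
  have hint := integrable_infDist_rpow hr hmom hw
  have hint' := integrable_infDist_rpow hr hmom (Set.mem_insert_of_mem ξ hw)
  have hgain : ∀ z ∈ B, ((5 / 8) ^ r - (1 / 8) ^ r) * δ ^ r ≤
      infDist z Γ ^ r - infDist z (insert ξ Γ) ^ r := by
    intro z hz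
    have hzξ : dist z ξ ≤ δ / 8 := hBξ hz
    have hnew : infDist z (insert ξ Γ) ≤ 1 / 8 * δ := by
      linarith [infDist_le_dist_of_mem (Set.mem_insert ξ Γ) (x := z)]
    have hold : 5 / 8 * δ ≤ infDist z Γ := by
      linarith [infDist_le_infDist_add_dist (x := x) (y := z) (s := Γ), dist_triangle x ξ z,
        dist_comm z ξ]
    have hδ : 0 ≤ δ := infDist_nonneg
    rw [sub_mul, ← Real.mul_rpow (by norm_num) hδ, ← Real.mul_rpow (by norm_num) hδ]
    exact sub_le_sub (Real.rpow_le_rpow (by positivity) hold hr.le)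
      (Real.rpow_le_rpow infDist_nonneg hnew hr.le)
  have hmono : ∀ z, infDist z (insert ξ Γ) ^ r ≤ infDist z Γ ^ r := fun z =>
    Real.rpow_le_rpow infDist_nonneg
      (infDist_le_infDist_of_subset (Set.subset_insert ξ Γ) ⟨w, hw⟩) hr.le
  calc ((5 / 8) ^ r - (1 / 8) ^ r) * δ ^ r * P.real B
      = ∫ z in B, ((5 / 8) ^ r - (1 / 8) ^ r) * δ ^ r ∂P := by
        rw [setIntegral_const, smul_eq_mul, mul_comm]
    _ ≤ ∫ z in B, (infDist z Γ ^ r - infDist z (insert ξ Γ) ^ r) ∂P :=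
        setIntegral_mono_on (integrableOn_const (measure_ne_top P B)) (hint.sub hint').integrableOn
          hB hgain
    _ ≤ ∫ z, (infDist z Γ ^ r - infDist z (insert ξ Γ) ^ r) ∂P :=
        setIntegral_le_integral (hint.sub hint') (ae_of_all _ fun z => sub_nonneg.2 (hmono z))
    _ = distortion r P Γ - distortion r P (insert ξ Γ) := integral_sub hint hint'

end Distortion

section Geometry

variable {E : Type*} [NormedAddCommGroup E] [NormedSpace ℝ E]

structure IsEquivSeminorm (N₀ : E → ℝ) (C₀ : ℝ) : Prop where
  add_le : ∀ x y, N₀ (x + y) ≤ N₀ x + N₀ y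
  smul : ∀ (c : ℝ) (x : E), N₀ (c • x) = |c| * N₀ x
  equiv : ∀ x, C₀⁻¹ * N₀ x ≤ ‖x‖ ∧ ‖x‖ ≤ C₀ * N₀ x

def IsAlmostRadialAntitoneOn (M : ℝ) (N₀ h : E → ℝ) (A : Set E) (c : E) : Prop :=
  ∀ x ∈ A \ {c}, ∀ y ∈ A \ {c}, N₀ (y - c) ≤ N₀ (x - c) → M * h x ≤ h y

/-- The point `ξ` is taken on the segment `[c, x]`, at distance `δ / 4` from `x`: it is closer
to `c` than `x` by at least `δ / (4 C₀)` in `N₀`, which absorbs the radius of the ball. -/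
lemma StarConvex.exists_closedBall_mul_le {N₀ h : E → ℝ} {C₀ M : ℝ} {A : Set E} {c x : E}
    (hstar : StarConvex ℝ c A) (hN₀ : IsEquivSeminorm N₀ C₀) (hC₀ : 1 ≤ C₀)
    (hrad : IsAlmostRadialAntitoneOn M N₀ h A c) (hx : x ∈ A) {δ : ℝ} (hδ : 0 < δ)
    (hδx : δ ≤ ‖x - c‖) :
    ∃ ξ ∈ A, dist x ξ = δ / 4 ∧ δ / (8 * C₀ ^ 2) ≤ ‖ξ - c‖ ∧
      ∀ z ∈ closedBall ξ (δ / (8 * C₀ ^ 2)) ∩ A, M * h x ≤ h z := by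
  set u := x - c
  have hu : 0 < ‖u‖ := hδ.trans_le hδx
  have hxc : x ≠ c := by rintro rfl; simp [u] at hu
  set τ := δ / (4 * ‖u‖) with hτ_def
  have hτ : 0 < τ := by positivity
  have hτu : τ * ‖u‖ = δ / 4 := by rw [hτ_def]; field_simp
  have hτ4 : τ ≤ 1 / 4 := by
    rw [hτ_def, div_le_iff₀ (by positivity)]; linarith
  set s := δ / (8 * C₀ ^ 2) with hs_def
  have hC₀0 : 0 < C₀ := by linarith
  have hs8 : s ≤ δ / 8 :=
    div_le_div_of_nonneg_left hδ.le (by norm_num) (by nlinarith [one_le_pow₀ (n := 2) hC₀])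
  have hCs : C₀ * s = δ / (8 * C₀) := by rw [hs_def]; field_simp
  set ξ := c + (1 - τ) • u
  have hξc : ξ - c = (1 - τ) • u := add_sub_cancel_left _ _
  have hnξ : 3 / 4 * δ ≤ ‖ξ - c‖ := by
    rw [hξc, norm_smul, Real.norm_of_nonneg (by linarith)]; nlinarith
  refine ⟨ξ, ?_, ?_, by linarith, ?_⟩
  · convert hstar hx hτ.le (by linarith : 0 ≤ 1 - τ) (add_sub_cancel τ 1) using 1
    simp only [ξ, u]; module
  · rw [dist_eq_norm, show x - ξ = τ • u by simp only [ξ, u]; module, norm_smul,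
      Real.norm_of_nonneg hτ.le, hτu]
  rintro z ⟨hzξ, hzA⟩
  rw [mem_closedBall, dist_eq_norm] at hzξ
  have hzc : z ≠ c := by
    rintro rfl
    rw [norm_sub_rev] at hzξ
    linarith
  refine hrad x ⟨hx, hxc⟩ z ⟨hzA, hzc⟩ ?_
  have hNzξ : N₀ (z - ξ) ≤ C₀ * s := by
    have := (hN₀.equiv (z - ξ)).1
    rw [inv_mul_le_iff₀ hC₀0] at this
    nlinarith
  have hNu : δ / (4 * C₀) ≤ τ * N₀ u := by
    have := (hN₀.equiv u).2
    rw [div_le_iff₀ (by positivity)]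
    nlinarith
  have h84 : δ / (8 * C₀) ≤ δ / (4 * C₀) :=
    div_le_div_of_nonneg_left hδ.le (by positivity) (by linarith)
  calc N₀ (z - c) = N₀ ((ξ - c) + (z - ξ)) := by congr 1; abel
    _ ≤ N₀ (ξ - c) + N₀ (z - ξ) := hN₀.add_le _ _
    _ = N₀ u - τ * N₀ u + N₀ (z - ξ) := by
        rw [hξc, hN₀.smul, abs_of_nonneg (by linarith)]; ring
    _ ≤ N₀ u := by linarith

end Geometry

section Density

variable {α : Type*} [MeasurableSpace α] {μ : Measure α} {h : α → ℝ}

lemma integral_withDensity_ofReal (hmeas : Measurable h) (h0 : ∀ x, 0 ≤ h x) (g : α → ℝ) :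
    ∫ x, g x ∂μ.withDensity (fun x => ENNReal.ofReal (h x)) = ∫ x, h x * g x ∂μ := by
  rw [integral_withDensity_eq_integral_toReal_smul hmeas.ennreal_ofReal
    (ae_of_all _ fun _ => ENNReal.ofReal_lt_top)]
  simp_rw [ENNReal.toReal_ofReal (h0 _), smul_eq_mul]

lemma mul_measureReal_le_withDensity_ofReal
    [IsFiniteMeasure (μ.withDensity fun x => ENNReal.ofReal (h x))] {B : Set α}
    (hB : MeasurableSet B) {m : ℝ} (hm : 0 ≤ m) (hmh : ∀ z ∈ B, m ≤ h z) :
    m * μ.real B ≤ (μ.withDensity fun x => ENNReal.ofReal (h x)).real B := by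
  rw [measureReal_def, measureReal_def, withDensity_apply _ hB, ← ENNReal.toReal_ofReal hm,
    ← ENNReal.toReal_mul, ← setLIntegral_const]
  refine ENNReal.toReal_mono ?_ (setLIntegral_mono' hB fun z hz => ENNReal.ofReal_le_ofReal
    (hmh z hz))
  rw [← withDensity_apply _ hB]
  exact measure_ne_top _ _

lemma integral_rpow_pos_of_withDensity_ne_zero (hmeas : Measurable h) (h0 : ∀ x, 0 ≤ h x)
    (hne : μ.withDensity (fun x => ENNReal.ofReal (h x)) ≠ 0) {θ : ℝ}
    (hint : Integrable (fun x => h x ^ θ) μ) : 0 < ∫ x, h x ^ θ ∂μ := by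
  refine (integral_nonneg fun x => Real.rpow_nonneg (h0 x) θ).lt_of_ne fun hI => hne ?_
  have hae := (integral_eq_zero_iff_of_nonneg (fun x => Real.rpow_nonneg (h0 x) θ) hint).1 hI.symm
  rw [withDensity_eq_zero_iff hmeas.ennreal_ofReal.aemeasurable]
  filter_upwards [hae] with x hx
  rcases (h0 x).eq_or_lt with h0x | hpos
  · simp [← h0x]
  · exact absurd hx (Real.rpow_pos_of_pos hpos θ).ne'

lemma ae_mem_of_msupport_subset [TopologicalSpace α] [HereditarilyLindelofSpace α]
    {P : Measure α} {A : Set α} (hA : msupport P ⊆ A) : ∀ᵐ x ∂P, x ∈ A :=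
  Filter.mem_of_superset P.support_mem_ae fun x hx => hA ((P.mem_support_iff_forall x).1 hx)

end Density

def IsPeakless {E : Type*} [NormedAddCommGroup E] [MeasurableSpace E] (μ : Measure E)
    (A : Set E) (c : E) (p₀ : ℝ) : Prop :=
  ∀ x ∈ A, ∀ t : ℝ, 0 < t → t ≤ ‖x - c‖ →
    p₀ * (μ (closedBall x t)).toReal ≤ (μ (closedBall x t ∩ A)).toReal

section Haar

variable {E : Type*} [NormedAddCommGroup E] [NormedSpace ℝ E] [FiniteDimensional ℝ E]
  [MeasurableSpace E]

/-- `(5/8)^r - (1/8)^r` is the pointwise gain of `mul_measure_le_distortion_sub_insert`, and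
`M p₀ μ(B(0,1)) / (8 C₀²)^d` the lower bound on `P(B(ξ, δ / (8 C₀²)) ∩ A) / (h x δ^d)` given by
`StarConvex.exists_closedBall_mul_le` and the peakless condition. -/
noncomputable def gainConst (μ : Measure E) (r M C₀ p₀ : ℝ) : ℝ :=
  ((5 / 8) ^ r - (1 / 8) ^ r) * M * p₀ * μ.real (ball 0 1) / (8 * C₀ ^ 2) ^ Module.finrank ℝ E

lemma gainConst_pos (μ : Measure E) [μ.IsAddHaarMeasure] {r M C₀ p₀ : ℝ} (hr : 0 < r)
    (hM : 0 < M) (hC₀ : C₀ ≠ 0) (hp₀ : 0 < p₀) : 0 < gainConst μ r M C₀ p₀ := by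
  have hcr : 0 < (5 / 8 : ℝ) ^ r - (1 / 8) ^ r :=
    sub_pos.2 (Real.rpow_lt_rpow (by norm_num) (by norm_num) hr)
  have hV : 0 < μ.real (ball (0 : E) 1) :=
    ENNReal.toReal_pos (measure_ball_pos μ 0 one_pos).ne' measure_ball_lt_top.ne
  unfold gainConst
  positivity

variable [BorelSpace E]

lemma exists_gainConst_mul_le_distortion_sub_insert {μ : Measure E} [μ.IsAddHaarMeasure]
    {h : E → ℝ} (h0 : ∀ x, 0 ≤ h x) {P : Measure E} [IsFiniteMeasure P]
    (hP : P = μ.withDensity fun x => ENNReal.ofReal (h x)) {r : ℝ} (hr : 0 < r)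
    (hmom : ∫⁻ x, (‖x‖₊ : ℝ≥0∞) ^ r ∂P < ⊤) {A : Set E} {c : E} (hA : MeasurableSet A)
    (hstar : StarConvex ℝ c A) {p₀ : ℝ} (hpeak : IsPeakless μ A c p₀) {N₀ : E → ℝ} {C₀ M : ℝ}
    (hN₀ : IsEquivSeminorm N₀ C₀) (hC₀ : 1 ≤ C₀) (hM : 0 ≤ M)
    (hrad : IsAlmostRadialAntitoneOn M N₀ h A c) {Γ : Set E} (hΓ : c ∈ Γ) {x : E}
    (hx : x ∈ A) :
    ∃ ξ, gainConst μ r M C₀ p₀ * (h x * infDist x Γ ^ (Module.finrank ℝ E + r)) ≤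
      distortion r P Γ - distortion r P (insert ξ Γ) := by
  set δ := infDist x Γ with hδ_def
  rcases (infDist_nonneg : 0 ≤ δ).eq_or_lt with hδ0 | hδ
  · refine ⟨c, ?_⟩
    rw [← hδ_def] at hδ0
    rw [Set.insert_eq_of_mem hΓ, sub_self, ← hδ0, Real.zero_rpow (by positivity), mul_zero,
      mul_zero]
  rw [← hδ_def] at hδ
  have hδx : δ ≤ ‖x - c‖ := (infDist_le_dist_of_mem hΓ).trans_eq (dist_eq_norm x c)
  obtain ⟨ξ, hξA, hxξ, hsξ, hball⟩ := hstar.exists_closedBall_mul_le hN₀ hC₀ hrad hx hδ hδx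
  set s := δ / (8 * C₀ ^ 2)
  have hC₀2 : 1 ≤ C₀ ^ 2 := one_le_pow₀ hC₀
  have hs : 0 < s := by positivity
  have hs8 : s ≤ δ / 8 := div_le_div_of_nonneg_left hδ.le (by norm_num) (by linarith)
  set B := closedBall ξ s ∩ A
  have hB : MeasurableSet B := measurableSet_closedBall.inter hA
  have hmass : M * h x * μ.real B ≤ P.real B := by
    subst hP
    exact mul_measureReal_le_withDensity_ofReal hB (mul_nonneg hM (h0 x)) hball
  have hvol : p₀ * (s ^ Module.finrank ℝ E * μ.real (ball 0 1)) ≤ μ.real B := by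
    rw [← μ.addHaar_real_closedBall ξ hs.le]
    exact hpeak ξ hξA s hs hsξ
  have hgain := mul_measure_le_distortion_sub_insert hr hmom ⟨c, hΓ⟩ hxξ.le hB
    (Set.inter_subset_left.trans (closedBall_subset_closedBall hs8))
  rw [← hδ_def] at hgain
  have hcr : 0 ≤ (5 / 8 : ℝ) ^ r - (1 / 8) ^ r :=
    sub_nonneg.2 (Real.rpow_le_rpow (by norm_num) (by norm_num) hr.le)
  refine ⟨ξ, le_trans ?_ hgain⟩
  calc gainConst μ r M C₀ p₀ * (h x * δ ^ (Module.finrank ℝ E + r))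
      = ((5 / 8) ^ r - (1 / 8) ^ r) * δ ^ r *
          (M * h x * (p₀ * (s ^ Module.finrank ℝ E * μ.real (ball 0 1)))) := by
        rw [gainConst, Real.rpow_add hδ, Real.rpow_natCast, div_pow]
        field_simp
    _ ≤ ((5 / 8) ^ r - (1 / 8) ^ r) * δ ^ r * (M * h x * μ.real B) := by
        gcongr
        exact mul_nonneg hM (h0 x)
    _ ≤ ((5 / 8) ^ r - (1 / 8) ^ r) * δ ^ r * P.real B := by gcongr

end Haar

lemma IsGreedy.gainConst_mul_rpow_le_distortion_sub {E : Type*} [NormedAddCommGroup E]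
    [NormedSpace ℝ E] [FiniteDimensional ℝ E] [MeasurableSpace E] [BorelSpace E]
    {μ : Measure E} [μ.IsAddHaarMeasure] {h : E → ℝ} (hmeas : Measurable h)
    (h0 : ∀ x, 0 ≤ h x) {P : Measure E} [IsFiniteMeasure P]
    (hP : P = μ.withDensity fun x => ENNReal.ofReal (h x)) {r : ℝ} (hr : 0 < r)
    (hint : Integrable (fun x => h x ^ ((Module.finrank ℝ E : ℝ) / (Module.finrank ℝ E + r))) μ)
    (hI : 0 < ∫ x, h x ^ ((Module.finrank ℝ E : ℝ) / (Module.finrank ℝ E + r)) ∂μ)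
    (hmom : ∫⁻ x, (‖x‖₊ : ℝ≥0∞) ^ r ∂P < ⊤) {a : ℕ → E} (ha : IsGreedy r P a) {A : Set E}
    (hA : MeasurableSet A) (hsupp : msupport P ⊆ A) (hstar : StarConvex ℝ (a 1) A) {p₀ : ℝ}
    (hp₀ : 0 < p₀) (hpeak : IsPeakless μ A (a 1) p₀) {N₀ : E → ℝ} {C₀ M : ℝ}
    (hN₀ : IsEquivSeminorm N₀ C₀) (hC₀ : 1 ≤ C₀) (hM : 0 < M)
    (hrad : IsAlmostRadialAntitoneOn M N₀ h A (a 1)) {k : ℕ} (hk : 1 ≤ k) :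
    gainConst μ r M C₀ p₀ *
        (∫ x, h x ^ ((Module.finrank ℝ E : ℝ) / (Module.finrank ℝ E + r)) ∂μ) ^
          (-(1 + Module.finrank ℝ E / r)) *
        distortion r P (aSet a k) ^ (1 + Module.finrank ℝ E / r) ≤
      distortion r P (aSet a k) - distortion r P (aSet a (k + 1)) := by
  set d : ℝ := (Module.finrank ℝ E : ℝ)
  set Γ := aSet a k
  set c₁ := gainConst μ r M C₀ p₀
  have hc₁ : 0 < c₁ := gainConst_pos μ hr hM (by linarith : (0 : ℝ) < C₀).ne' hp₀
  set Δ := distortion r P Γ - distortion r P (aSet a (k + 1))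
  have hΔ : 0 ≤ Δ := sub_nonneg.2 (ha.distortion_succ_le hr hk)
  have hkey : ∀ x ∈ A, c₁ * (h x * infDist x Γ ^ (d + r)) ≤ Δ := fun x hx => by
    obtain ⟨ξ, hξ⟩ := exists_gainConst_mul_le_distortion_sub_insert h0 hP hr hmom hA hstar hpeak
      hN₀ hC₀ hM.le hrad (mem_aSet_one a hk) hx
    linarith [ha.distortion_le_insert hr k ξ]
  have hae : ∀ᵐ x ∂μ, h x * infDist x Γ ^ (d + r) ≤ Δ / c₁ := by
    have hAP := ae_mem_of_msupport_subset hsupp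
    rw [hP, ae_withDensity_iff hmeas.ennreal_ofReal] at hAP
    filter_upwards [hAP] with x hx
    rcases (h0 x).eq_or_lt with hx0 | hxpos
    · rw [← hx0, zero_mul]; positivity
    · rw [le_div_iff₀ hc₁, mul_comm]
      exact hkey x (hx (ENNReal.ofReal_pos.2 hxpos).ne')
  have hDΓ : distortion r P Γ = ∫ x, h x * infDist x Γ ^ r ∂μ := by
    rw [distortion, hP, integral_withDensity_ofReal hmeas h0]
  have hD := integral_mul_rpow_le_of_ae_mul_rpow_add_le hr.le (by positivity) h0
    (fun _ => infDist_nonneg) (hmeas.mul ((continuous_infDist_pt Γ).rpow_const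
      fun _ => Or.inr hr.le).measurable).aestronglyMeasurable hint hae
  refine mul_rpow_neg_mul_rpow_le_of_le_rpow_inv_mul hc₁ (distortion_nonneg Γ) hI hΔ
    (by positivity) ?_
  rwa [show (1 + d / r)⁻¹ = r / (d + r) by field_simp; ring, hDΓ]

/-- Hybrid Zador–Pierce rate for greedy quantization: for every `d ≥ 1`, `r > 0`,
`M ∈ (0,1]`, `C₀ ∈ [1,∞)`, `p₀ > 0` (and Lebesgue/Haar measure `μ`) there is `κ ∈ (0,∞)`
such that if `P = h·μ` with `h ∈ L^{d/(d+r)}(μ)`, `P` has finite `r`-th moment,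
`(a_n)` is an `L^r`-optimal greedy sequence for `P`, `A ⊇ supp P` is a Borel set containing
`a₁`, star-shaped w.r.t. `a₁`, with peakless constant `≥ p₀`, and `h` is almost radial
non-increasing on `A` w.r.t. `a₁` (for a norm `N₀` which is `C₀`-equivalent to `‖·‖`, with
constant `M`), then `e_r(a^{(n)},P) ≤ κ ‖h‖_{L^{d/(d+r)}}^{1/r} (n−1)^{−1/d}` for all `n ≥ 2`. -/
theorem stmt_6 {E : Type*} [NormedAddCommGroup E] [NormedSpace ℝ E]
    [FiniteDimensional ℝ E] [MeasurableSpace E] [BorelSpace E]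
    (d : ℕ) (hd : 1 ≤ d) (hdim : Module.finrank ℝ E = d)
    (μ : Measure E) [μ.IsAddHaarMeasure]
    (r : ℝ) (hr : 0 < r)
    (M : ℝ) (hM : M ∈ Set.Ioc (0 : ℝ) 1)
    (C₀ : ℝ) (hC₀ : 1 ≤ C₀)
    (p₀ : ℝ) (hp₀ : 0 < p₀) :
    ∃ κ : ℝ, 0 < κ ∧
      ∀ (h : E → ℝ), Measurable h → (∀ x, 0 ≤ h x) →
      ∀ (P : Measure E), P = μ.withDensity (fun x => ENNReal.ofReal (h x)) →
        IsProbabilityMeasure P →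
        Integrable (fun x => h x ^ ((d : ℝ) / ((d : ℝ) + r))) μ →
        (∫⁻ x, (‖x‖₊ : ℝ≥0∞) ^ r ∂P) < ⊤ →
      ∀ a : ℕ → E, IsGreedy r P a →
      ∀ A : Set E, MeasurableSet A → msupport P ⊆ A → a 1 ∈ A →
        StarConvex ℝ (a 1) A →
        (∀ x ∈ A, ∀ t : ℝ, 0 < t → t ≤ ‖x - a 1‖ →
          p₀ * (μ (closedBall x t)).toReal ≤ (μ (closedBall x t ∩ A)).toReal) →
      ∀ N₀ : E → ℝ,
        (∀ x, N₀ x = 0 ↔ x = 0) →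
        (∀ x y, N₀ (x + y) ≤ N₀ x + N₀ y) →
        (∀ (c : ℝ) (x : E), N₀ (c • x) = |c| * N₀ x) →
        (∀ x, C₀⁻¹ * N₀ x ≤ ‖x‖ ∧ ‖x‖ ≤ C₀ * N₀ x) →
        (∀ x ∈ A \ {a 1}, ∀ y ∈ A \ {a 1},
          N₀ (y - a 1) ≤ N₀ (x - a 1) → M * h x ≤ h y) →
      ∀ n : ℕ, 2 ≤ n →
        qerr r P (aSet a n) ≤
          κ * ((∫ x, h x ^ ((d : ℝ) / ((d : ℝ) + r)) ∂μ) ^ (((d : ℝ) + r) / (d : ℝ))) ^ (1 / r)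
            * ((n : ℝ) - 1) ^ (-(1 / (d : ℝ))) := by
  subst hdim
  have hγ : 0 < (Module.finrank ℝ E : ℝ) / r := div_pos (by exact_mod_cast hd) hr
  have hc₁ := gainConst_pos μ hr hM.1 (by linarith : (0 : ℝ) < C₀).ne' hp₀
  refine ⟨(gainConst μ r M C₀ p₀ * (Module.finrank ℝ E / r)) ^ (-(1 / (Module.finrank ℝ E : ℝ))),
    by positivity, ?_⟩
  intro h hmeas h0 P hP _ hint hmom a ha A hA hsupp _ hstar hpeak N₀ _ hadd hsmul hequiv hrad n hn
  have hI := integral_rpow_pos_of_withDensity_ne_zero hmeas h0 (hP ▸ IsProbabilityMeasure.ne_zero P)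
    hint
  have hdecay := le_rpow_neg_of_decay (u := fun k => distortion r P (aSet a k)) hγ
    (by positivity) (fun k => distortion_nonneg _)
    (fun k hk => ha.gainConst_mul_rpow_le_distortion_sub hmeas h0 hP hr hint hI hmom hA hsupp
      hstar hp₀ hpeak ⟨hadd, hsmul, hequiv⟩ hC₀ hM.1 hrad hk) hn
  have hn1 : (0 : ℝ) ≤ n - 1 := by
    have : (2 : ℝ) ≤ n := by exact_mod_cast hn
    linarith
  rw [qerr_eq_distortion_rpow, ← rpow_rate_eq hc₁.le hI (by positivity) hr hn1]
  exact Real.rpow_le_rpow (distortion_nonneg _) hdecay (by positivity)
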